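/- arXiv:1912.01032 — 7 statements merged into one kernel-verified Lean document; each statement's English description precedes it below -/
import Mathlib

section
/- Let p : ℝ^n → ℝ be a non-constant multilinear polynomial taking values in {-1,1} on {-1,1}^n. Then for every a with a_i ∈ (-1,1) for all i, we have p(a) ∈ (-1,1). -/
/-!
On the open cube, `a` is the mean of the product distribution on the vertices `{-1,1}^n` in which
the `i`-th coordinate is `1` with probability `(1 + a i) / 2`. The coordinates are independent, so
every monomial `∏ i ∈ S, x i`, and hence every multilinear `p`, has mean `p a`. Thus `p a` is a
convex combination of the vertex values `±1` with strictly positive weights, and since both values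
occur it lies strictly between `-1` and `1`.
-/

open Finset

section WeightedSum

variable {α : Type*} {s : Finset α} {w v : α → ℝ}

theorem sum_mul_lt_of_exists_lt {M : ℝ} (hw : ∀ i ∈ s, 0 < w i) (hw_sum : ∑ i ∈ s, w i = 1)
    (hv : ∀ i ∈ s, v i ≤ M) (hlt : ∃ i ∈ s, v i < M) : ∑ i ∈ s, w i * v i < M :=
  calc ∑ i ∈ s, w i * v i
      < ∑ i ∈ s, w i * M :=
        sum_lt_sum (fun i hi => mul_le_mul_of_nonneg_left (hv i hi) (hw i hi).le)
          (hlt.imp fun i ⟨hi, hvi⟩ => ⟨hi, mul_lt_mul_of_pos_left hvi (hw i hi)⟩)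
    _ = M := by rw [← sum_mul, hw_sum, one_mul]

theorem sum_mul_mem_Ioo {m M : ℝ} (hw : ∀ i ∈ s, 0 < w i) (hw_sum : ∑ i ∈ s, w i = 1)
    (hv : ∀ i ∈ s, v i ∈ Set.Icc m M) (hlo : ∃ i ∈ s, m < v i) (hhi : ∃ i ∈ s, v i < M) :
    ∑ i ∈ s, w i * v i ∈ Set.Ioo m M := by
  have hneg : ∑ i ∈ s, w i * -v i < -m :=
    sum_mul_lt_of_exists_lt hw hw_sum (fun i hi => neg_le_neg (hv i hi).1)
      (hlo.imp fun _ ⟨hi, h⟩ => ⟨hi, neg_lt_neg h⟩)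
  simp only [mul_neg, sum_neg_distrib, neg_lt_neg_iff] at hneg
  exact ⟨hneg, sum_mul_lt_of_exists_lt hw hw_sum (fun i hi => (hv i hi).2) hhi⟩

end WeightedSum

section Cube

variable {ι : Type*} [Fintype ι] [DecidableEq ι]

variable (ι) in
noncomputable def signCube : Finset (ι → ℝ) :=
  Fintype.piFinset fun _ => {-1, 1}

theorem mem_signCube {x : ι → ℝ} : x ∈ signCube ι ↔ ∀ i, x i = 1 ∨ x i = -1 := by
  simp only [signCube, Fintype.mem_piFinset, mem_insert, mem_singleton, or_comm]

/-- The probability of the vertex `x` under the product distribution with mean `a`. -/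
noncomputable def cubeWeight (a x : ι → ℝ) : ℝ :=
  ∏ i, (1 + a i * x i) / 2

theorem cubeWeight_pos {a : ι → ℝ} (ha : ∀ i, a i ∈ Set.Ioo (-1 : ℝ) 1) {x : ι → ℝ}
    (hx : x ∈ signCube ι) : 0 < cubeWeight a x :=
  prod_pos fun i _ => by
    obtain ⟨h₁, h₂⟩ := ha i
    rcases mem_signCube.1 hx i with h | h <;> rw [h] <;> linarith

theorem sum_cubeWeight_mul_prod (a : ι → ℝ) (S : Finset ι) :
    ∑ x ∈ signCube ι, cubeWeight a x * ∏ i ∈ S, x i = ∏ i ∈ S, a i := by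
  have hS : ∀ y : ι → ℝ, ∏ i ∈ S, y i = ∏ i, if i ∈ S then y i else 1 := fun y => by
    rw [prod_ite_mem, univ_inter]
  have hfactor : ∀ i, ∑ t ∈ ({-1, 1} : Finset ℝ), (1 + a i * t) / 2 * (if i ∈ S then t else 1)
      = if i ∈ S then a i else 1 := fun i => by
    rw [sum_pair (by norm_num)]
    split_ifs <;> ring
  simp only [signCube, cubeWeight, hS, ← prod_mul_distrib]
  rw [← prod_congr rfl fun i (_ : i ∈ univ) => hfactor i, prod_univ_sum]

theorem sum_cubeWeight (a : ι → ℝ) : ∑ x ∈ signCube ι, cubeWeight a x = 1 := by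
  simpa using sum_cubeWeight_mul_prod a ∅

theorem eq_sum_cubeWeight_mul_of_multilinear {p : (ι → ℝ) → ℝ} {c : Finset ι → ℝ}
    (hp : ∀ x, p x = ∑ S : Finset ι, c S * ∏ i ∈ S, x i) (a : ι → ℝ) :
    p a = ∑ x ∈ signCube ι, cubeWeight a x * p x := by
  simp only [hp, mul_sum, mul_left_comm (cubeWeight a _)]
  rw [sum_comm]
  simp only [← mul_sum, sum_cubeWeight_mul_prod]

end Cube

/-- A non-constant multilinear polynomial taking values in `{-1,1}` on the
hypercube takes values in the open interval `(-1,1)` on the open cube. -/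
theorem stmt_2 (n : ℕ) (p : (Fin n → ℝ) → ℝ)
    (hml : ∃ c : Finset (Fin n) → ℝ,
      ∀ x : Fin n → ℝ, p x = ∑ S : Finset (Fin n), c S * ∏ i ∈ S, x i)
    (hbool : ∀ a : Fin n → ℝ, (∀ i, a i = 1 ∨ a i = -1) → p a = 1 ∨ p a = -1)
    (hnc : ∃ a b : Fin n → ℝ, (∀ i, a i = 1 ∨ a i = -1) ∧ (∀ i, b i = 1 ∨ b i = -1) ∧
      p a ≠ p b) :
    ∀ a : Fin n → ℝ, (∀ i, a i ∈ Set.Ioo (-1 : ℝ) 1) → p a ∈ Set.Ioo (-1 : ℝ) 1 := by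
  intro a ha
  obtain ⟨c, hc⟩ := hml
  obtain ⟨x, y, hx, hy, hxy⟩ := hnc
  rw [← mem_signCube] at hx hy
  have hval : ∀ z ∈ signCube (Fin n), p z ∈ Set.Icc (-1 : ℝ) 1 := fun z hz => by
    rcases hbool z (mem_signCube.1 hz) with h | h <;> norm_num [h]
  have hlo : ∃ z ∈ signCube (Fin n), -1 < p z := by
    by_contra! h
    exact hxy (by linarith [h x hx, h y hy, (hval x hx).1, (hval y hy).1])
  have hhi : ∃ z ∈ signCube (Fin n), p z < 1 := by
    by_contra! h
    exact hxy (by linarith [h x hx, h y hy, (hval x hx).2, (hval y hy).2])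
  rw [eq_sum_cubeWeight_mul_of_multilinear hc a]
  exact sum_mul_mem_Ioo (fun z hz => cubeWeight_pos ha hz) (sum_cubeWeight a) hval hlo hhi
end

section
/- Let p : ℝ^n → ℝ be a non-constant multilinear polynomial taking values in {-1,1} on {-1,1}^n, and let a ∈ [-1,1]^n satisfy p(a) = -1. Then the restriction of p obtained by fixing the coordinates i with a_i ∈ {-1,1} to their values a_i is a constant function of the remaining coordinates. -/
/-!
Multilinearity makes `p` affine in each coordinate, so on the cube `[-1,1]^n` every value of `p`
is an iterated convex combination of its values at the vertices; hence `-1 ≤ p ≤ 1` on the cube.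
If `p a = -1` and `a j ∈ (-1,1)`, then `p a` is a combination with positive weights of the values
at `a j = ±1`, both `≥ -1`, so both equal `-1` and `p` is `-1` along the whole line through `a` in
direction `j`. Moving one free coordinate at a time, `p = -1` on the face of the cube through `a`,
and affinity in each coordinate extends this to the affine span of that face.
-/

open Function Set

variable {ι : Type*} [DecidableEq ι]

@[elab_as_elim]
theorem induction_on_update [Fintype ι] {α : Type*} (good : ι → α → Prop)
    {motive : (ι → α) → Prop}
    (base : ∀ x, (∀ i, good i (x i)) → motive x)
    (step : ∀ x j, ¬ good j (x j) → (∀ t, good j t → motive (update x j t)) → motive x)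
    (x : ι → α) : motive x := by
  classical
  induction hx : (Finset.univ.filter fun i => ¬ good i (x i)).card using Nat.strong_induction_on
    generalizing x with
  | _ _ ih =>
    by_cases hgood : ∀ i, good i (x i)
    · exact base x hgood
    obtain ⟨j, hj⟩ := not_forall.mp hgood
    refine step x j hj fun t ht => ih _ ?_ (update x j t) rfl
    subst hx
    refine Finset.card_lt_card ⟨fun i hi => ?_, fun hsub => ?_⟩
    · rcases eq_or_ne i j with rfl | hij
      · simp_all
      · simpa [hij] using hi
    · simpa [ht] using hsub (Finset.mem_filter.mpr ⟨Finset.mem_univ j, hj⟩)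

/-- Affinity in each coordinate, written as interpolation between the values at `±1`. -/
def IsMultiaffine (p : (ι → ℝ) → ℝ) : Prop :=
  ∀ x j t, p (update x j t) = (1 + t) / 2 * p (update x j 1) + (1 - t) / 2 * p (update x j (-1))

theorem isMultiaffine_of_eq_sum_prod [Fintype ι] {p : (ι → ℝ) → ℝ} (c : Finset ι → ℝ)
    (hp : ∀ x, p x = ∑ S : Finset ι, c S * ∏ i ∈ S, x i) : IsMultiaffine p := by
  intro x j t
  simp only [hp, Finset.mul_sum, ← Finset.sum_add_distrib]
  refine Finset.sum_congr rfl fun S _ => ?_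
  by_cases hj : j ∈ S
  · simp only [Finset.prod_update_of_mem hj]
    ring
  · simp only [Finset.prod_update_of_notMem hj]
    ring

theorem update_mem_cube {x : ι → ℝ} (hx : ∀ i, x i ∈ Icc (-1 : ℝ) 1) (j : ι) (t : ℝ)
    (ht : t ∈ Icc (-1 : ℝ) 1) : ∀ i, update x j t i ∈ Icc (-1 : ℝ) 1 :=
  (forall_update_iff x fun _ v => v ∈ Icc (-1 : ℝ) 1).2 ⟨ht, fun i _ => hx i⟩

namespace IsMultiaffine

variable {p : (ι → ℝ) → ℝ} (hp : IsMultiaffine p)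
include hp

theorem apply_eq_interpolate (x : ι → ℝ) (j : ι) :
    p x = (1 + x j) / 2 * p (update x j 1) + (1 - x j) / 2 * p (update x j (-1)) := by
  simpa using hp x j (x j)

theorem mem_Icc_of_boolean [Fintype ι]
    (hbool : ∀ b : ι → ℝ, (∀ i, b i = 1 ∨ b i = -1) → p b = 1 ∨ p b = -1) (x : ι → ℝ) :
    (∀ i, x i ∈ Icc (-1 : ℝ) 1) → p x ∈ Icc (-1 : ℝ) 1 := by
  refine induction_on_update (fun _ (t : ℝ) => t = 1 ∨ t = -1) (fun x hx _ => ?_)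
    (fun x j _ ih hx => ?_) x
  · rcases hbool x hx with h | h <;> rw [h] <;> norm_num
  · obtain ⟨h₁, h₁'⟩ := ih 1 (.inl rfl) (update_mem_cube hx j 1 (by norm_num))
    obtain ⟨h₂, h₂'⟩ := ih (-1) (.inr rfl) (update_mem_cube hx j (-1) (by norm_num))
    obtain ⟨hxj, hxj'⟩ := hx j
    rw [hp.apply_eq_interpolate x j]
    constructor <;> nlinarith

section Minimum

variable {m : ℝ} (hmin : ∀ x, (∀ i, x i ∈ Icc (-1 : ℝ) 1) → m ≤ p x)
include hmin

theorem apply_update_eq_of_isMin {x : ι → ℝ} (hx : ∀ i, x i ∈ Icc (-1 : ℝ) 1) (hpx : p x = m)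
    {j : ι} (hj : x j ∈ Ioo (-1 : ℝ) 1) (t : ℝ) : p (update x j t) = m := by
  have h₁ := hmin _ (update_mem_cube hx j 1 (by norm_num))
  have h₂ := hmin _ (update_mem_cube hx j (-1) (by norm_num))
  have hinterp := hp.apply_eq_interpolate x j
  obtain ⟨hj, hj'⟩ := hj
  have e₁ : p (update x j 1) = m := by nlinarith
  have e₂ : p (update x j (-1)) = m := by nlinarith
  rw [hp x j t, e₁, e₂]
  ring

theorem apply_eq_of_isMin_of_mem_cube [Fintype ι] {x : ι → ℝ} (z : ι → ℝ)
    (hz : ∀ i, z i ∈ Icc (-1 : ℝ) 1) :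
    (∀ i, x i ∈ Icc (-1 : ℝ) 1) → p x = m → (∀ i, (x i = 1 ∨ x i = -1) → z i = x i) →
      p z = m := by
  refine induction_on_update (fun i t => t = z i) (fun x hxz _ hpx _ => ?_)
    (fun x j hxj ih hx hpx hfix => ?_) x
  · rwa [funext hxz] at hpx
  · have hj : x j ∈ Ioo (-1 : ℝ) 1 := by
      obtain ⟨h, h'⟩ := hx j
      refine ⟨lt_of_le_of_ne h fun e => hxj ?_, lt_of_le_of_ne h' fun e => hxj ?_⟩
      exacts [(hfix j (.inr e.symm)).symm, (hfix j (.inl e)).symm]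
    refine ih (z j) rfl (update_mem_cube hx j _ (hz j))
      (hp.apply_update_eq_of_isMin hmin hx hpx hj _) ?_
    rw [forall_update_iff x fun i v => (v = 1 ∨ v = -1) → z i = v]
    exact ⟨fun _ => rfl, fun i _ => hfix i⟩

theorem apply_eq_of_isMin [Fintype ι] {a : ι → ℝ} (ha : ∀ i, a i ∈ Icc (-1 : ℝ) 1)
    (hpa : p a = m) (y : ι → ℝ) : (∀ i, (a i = 1 ∨ a i = -1) → y i = a i) → p y = m := by
  refine induction_on_update (fun _ (t : ℝ) => t ∈ Icc (-1 : ℝ) 1)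
    (fun y hy => hp.apply_eq_of_isMin_of_mem_cube hmin y hy ha hpa) (fun y j hyj ih hfix => ?_) y
  have hj : ¬ (a j = 1 ∨ a j = -1) := fun h => hyj (hfix j h ▸ ha j)
  have hfix' (t : ℝ) : ∀ i, (a i = 1 ∨ a i = -1) → update y j t i = a i := by
    intro i hi
    rw [update_of_ne (by rintro rfl; exact hj hi)]
    exact hfix i hi
  rw [hp.apply_eq_interpolate y j, ih 1 (by norm_num) (hfix' 1),
    ih (-1) (by norm_num) (hfix' (-1))]
  ring

end Minimum

end IsMultiaffine

theorem stmt_3_general (n : ℕ) (p : (Fin n → ℝ) → ℝ)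
    (hml : ∃ c : Finset (Fin n) → ℝ,
      ∀ x : Fin n → ℝ, p x = ∑ S : Finset (Fin n), c S * ∏ i ∈ S, x i)
    (hbool : ∀ b : Fin n → ℝ, (∀ i, b i = 1 ∨ b i = -1) → p b = 1 ∨ p b = -1)
    (a : Fin n → ℝ) (ha : ∀ i, a i ∈ Set.Icc (-1 : ℝ) 1) (hval : p a = -1) :
    ∀ y : Fin n → ℝ, (∀ i, (a i = 1 ∨ a i = -1) → y i = a i) → p y = p a := by
  obtain ⟨c, hc⟩ := hml
  have hp := isMultiaffine_of_eq_sum_prod c hc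
  have hmin x hx : -1 ≤ p x := (hp.mem_Icc_of_boolean hbool x hx).1
  intro y hy
  rw [hval]
  exact hp.apply_eq_of_isMin hmin ha hval y hy

/-- If a non-constant multilinear polynomial `p` with Boolean values on the
hypercube attains the value `-1` at a point `a` of the cube `[-1,1]^n`, then
fixing the `±1` coordinates of `a` makes `p` constant in the remaining
coordinates: `a` is a feasible solution. -/
theorem stmt_3 (n : ℕ) (p : (Fin n → ℝ) → ℝ)
    (hml : ∃ c : Finset (Fin n) → ℝ,
      ∀ x : Fin n → ℝ, p x = ∑ S : Finset (Fin n), c S * ∏ i ∈ S, x i)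
    (hbool : ∀ b : Fin n → ℝ, (∀ i, b i = 1 ∨ b i = -1) → p b = 1 ∨ p b = -1)
    (hnc : ∃ b b' : Fin n → ℝ, (∀ i, b i = 1 ∨ b i = -1) ∧ (∀ i, b' i = 1 ∨ b' i = -1) ∧
      p b ≠ p b')
    (a : Fin n → ℝ) (ha : ∀ i, a i ∈ Set.Icc (-1 : ℝ) 1) (hval : p a = -1) :
    ∀ y : Fin n → ℝ, (∀ i, (a i = 1 ∨ a i = -1) → y i = a i) → p y = p a :=
  stmt_3_general n p hml hbool a ha hval
end

section
/- Let f be a Boolean formula that is the conjunction of m clauses c_1,…,c_m, each a non-constant Boolean function {-1,1}^n → {-1,1}, and let F = ∑_{j=1}^m p_j where p_j is the multilinear (Fourier) extension of c_j. Then f is satisfiable (some a ∈ {-1,1}^n has c_j(a) = -1 for all j) if and only if min over x ∈ [-1,1]^n of F(x) equals -m. -/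
/-!
A multilinear function is affine in each coordinate, so on the cube `[-1,1]^n` its value at a
point is a convex combination of its values after setting one coordinate to `1` or `-1`.
Rounding the coordinates one at a time therefore reaches a vertex of `{-1,1}^n` without
increasing the value: the minimum over the cube is attained at a vertex. There each clause
is `±1`, so the sum is at least `-m`, with equality exactly at a satisfying assignment.
-/

variable {ι : Type*} [Fintype ι]

def IsMultilinear (F : (ι → ℝ) → ℝ) : Prop :=
  ∃ c : Finset ι → ℝ, ∀ x, F x = ∑ S : Finset ι, c S * ∏ i ∈ S, x i

namespace IsMultilinear

theorem sum {κ : Type*} (s : Finset κ) {p : κ → (ι → ℝ) → ℝ}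
    (hp : ∀ j, IsMultilinear (p j)) : IsMultilinear fun x => ∑ j ∈ s, p j x := by
  choose c hc using hp
  refine ⟨fun S => ∑ j ∈ s, c j S, fun x => ?_⟩
  simp_rw [Finset.sum_mul, hc]
  exact Finset.sum_comm

variable [DecidableEq ι] {F : (ι → ℝ) → ℝ}

theorem eq_interpolate_update (hF : IsMultilinear F) (x : ι → ℝ) (i : ι) :
    F x = (1 + x i) / 2 * F (Function.update x i 1)
      + (1 - x i) / 2 * F (Function.update x i (-1)) := by
  obtain ⟨c, hc⟩ := hF
  conv_lhs => rw [← Function.update_eq_self i x]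
  simp only [hc, Finset.mul_sum, ← Finset.sum_add_distrib]
  refine Finset.sum_congr rfl fun S _ => ?_
  by_cases hi : i ∈ S
  · simp only [Finset.prod_update_of_mem hi]
    ring
  · simp only [Finset.prod_update_of_notMem hi]
    ring

theorem exists_update_le (hF : IsMultilinear F) {x : ι → ℝ} {i : ι}
    (hx : x i ∈ Set.Icc (-1 : ℝ) 1) :
    ∃ t : ℝ, (t = 1 ∨ t = -1) ∧ F (Function.update x i t) ≤ F x := by
  obtain ⟨hlo, hhi⟩ := hx
  rw [hF.eq_interpolate_update x i]
  rcases le_total (F (Function.update x i 1)) (F (Function.update x i (-1))) with h | h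
  · exact ⟨1, Or.inl rfl, by nlinarith⟩
  · exact ⟨-1, Or.inr rfl, by nlinarith⟩

theorem exists_vertex_le_of_subset (hF : IsMultilinear F) (s : Finset ι) :
    ∀ x : ι → ℝ, (∀ i, x i ∈ Set.Icc (-1 : ℝ) 1) → (∀ i ∉ s, x i = 1 ∨ x i = -1) →
      ∃ a : ι → ℝ, (∀ i, a i = 1 ∨ a i = -1) ∧ F a ≤ F x := by
  induction s using Finset.induction_on with
  | empty => exact fun x _ hvert => ⟨x, fun i => hvert i (Finset.notMem_empty i), le_rfl⟩
  | insert i s _ ih =>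
    intro x hcube hvert
    obtain ⟨t, ht, hle⟩ := hF.exists_update_le (hcube i)
    have hcube' : ∀ j, Function.update x i t j ∈ Set.Icc (-1 : ℝ) 1 := by
      intro j
      rcases eq_or_ne j i with rfl | hji
      · rcases ht with rfl | rfl <;> simp
      · simpa [hji] using hcube j
    have hvert' : ∀ j ∉ s, Function.update x i t j = 1 ∨ Function.update x i t j = -1 := by
      intro j hj
      rcases eq_or_ne j i with rfl | hji
      · simpa using ht
      · simpa [hji] using hvert j (by simp [hji, hj])
    obtain ⟨a, ha, hale⟩ := ih _ hcube' hvert'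
    exact ⟨a, ha, hale.trans hle⟩

theorem exists_vertex_le (hF : IsMultilinear F) {x : ι → ℝ}
    (hx : ∀ i, x i ∈ Set.Icc (-1 : ℝ) 1) :
    ∃ a : ι → ℝ, (∀ i, a i = 1 ∨ a i = -1) ∧ F a ≤ F x :=
  hF.exists_vertex_le_of_subset Finset.univ x hx fun i hi => absurd (Finset.mem_univ i) hi

end IsMultilinear

theorem neg_card_le_sum_of_sign {v : ι → ℝ} (hv : ∀ j, v j = 1 ∨ v j = -1) :
    -(Fintype.card ι : ℝ) ≤ ∑ j, v j := by
  have : ∑ _j : ι, (-1 : ℝ) ≤ ∑ j, v j :=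
    Finset.sum_le_sum fun j _ => by rcases hv j with h | h <;> norm_num [h]
  simpa using this

theorem sum_eq_neg_card_iff_of_sign {v : ι → ℝ} (hv : ∀ j, v j = 1 ∨ v j = -1) :
    ∑ j, v j = -(Fintype.card ι : ℝ) ↔ ∀ j, v j = -1 := by
  have hle : ∀ j ∈ Finset.univ, (-1 : ℝ) ≤ v j := fun j _ => by
    rcases hv j with h | h <;> norm_num [h]
  have hcard : -(Fintype.card ι : ℝ) = ∑ _j : ι, (-1 : ℝ) := by simp
  rw [hcard, eq_comm, Finset.sum_eq_sum_iff_of_le hle]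
  simp only [Finset.mem_univ, true_implies, eq_comm]

theorem stmt_4_general (n m : ℕ) (p : Fin m → (Fin n → ℝ) → ℝ)
    (hml : ∀ j, ∃ c : Finset (Fin n) → ℝ,
      ∀ x : Fin n → ℝ, p j x = ∑ S : Finset (Fin n), c S * ∏ i ∈ S, x i)
    (hbool : ∀ j, ∀ a : Fin n → ℝ, (∀ i, a i = 1 ∨ a i = -1) →
      p j a = 1 ∨ p j a = -1) :
    (∃ a : Fin n → ℝ, (∀ i, a i = 1 ∨ a i = -1) ∧ ∀ j, p j a = -1) ↔
      IsLeast ((fun x => ∑ j, p j x) ''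
        {x : Fin n → ℝ | ∀ i, x i ∈ Set.Icc (-1 : ℝ) 1}) (-(m : ℝ)) := by
  have hF : IsMultilinear fun x => ∑ j, p j x := IsMultilinear.sum _ hml
  have hvert : ∀ a : Fin n → ℝ, (∀ i, a i = 1 ∨ a i = -1) → -(m : ℝ) ≤ ∑ j, p j a :=
    fun a ha => by simpa using neg_card_le_sum_of_sign fun j => hbool j a ha
  constructor
  · rintro ⟨a, ha, hsat⟩
    refine ⟨⟨a, fun i => ?_, by simp [hsat]⟩, ?_⟩
    · rcases ha i with h | h <;> simp [h]
    · rintro _ ⟨x, hx, rfl⟩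
      obtain ⟨b, hb, hle⟩ := hF.exists_vertex_le hx
      exact (hvert b hb).trans hle
  · rintro ⟨⟨x, hx, hFx⟩, -⟩
    obtain ⟨a, ha, hle⟩ := hF.exists_vertex_le hx
    have hFa : ∑ j, p j a = -((Fintype.card (Fin m) : ℕ) : ℝ) := by
      rw [Fintype.card_fin]
      exact le_antisymm (hFx ▸ hle) (hvert a ha)
    exact ⟨a, ha, (sum_eq_neg_card_iff_of_sign fun j => hbool j a ha).1 hFa⟩

/-- Reduction of SAT to continuous optimization: a conjunction of `m`
non-constant Boolean clauses (with multilinear extensions `p j`) is satisfiable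
iff the minimum of `F = ∑ j, p j` over the cube `[-1,1]^n` equals `-m`. -/
theorem stmt_4 (n m : ℕ) (p : Fin m → (Fin n → ℝ) → ℝ)
    (hml : ∀ j, ∃ c : Finset (Fin n) → ℝ,
      ∀ x : Fin n → ℝ, p j x = ∑ S : Finset (Fin n), c S * ∏ i ∈ S, x i)
    (hbool : ∀ j, ∀ a : Fin n → ℝ, (∀ i, a i = 1 ∨ a i = -1) →
      p j a = 1 ∨ p j a = -1)
    (hnc : ∀ j, ∃ b b' : Fin n → ℝ,
      (∀ i, b i = 1 ∨ b i = -1) ∧ (∀ i, b' i = 1 ∨ b' i = -1) ∧ p j b ≠ p j b') :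
    (∃ a : Fin n → ℝ, (∀ i, a i = 1 ∨ a i = -1) ∧ ∀ j, p j a = -1) ↔
      IsLeast ((fun x => ∑ j, p j x) ''
        {x : Fin n → ℝ | ∀ i, x i ∈ Set.Icc (-1 : ℝ) 1}) (-(m : ℝ)) :=
  stmt_4_general n m p hml hbool
end

section
/- Every critical point of a non-constant multilinear polynomial F : ℝ^n → ℝ is a saddle point: if ∇F(a) = 0 then for every ε > 0 there exist points x, y with ‖x − a‖ < ε, ‖y − a‖ < ε, F(x) > F(a), and F(y) < F(a). -/
/-!
Reflecting `x` through `a` in any set of coordinates preserves `‖x - a‖`, and since `F` is affine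
in each coordinate, `F` averages to `F a` over the `2 ^ n` reflections of `x`. So it suffices to
find points `x` arbitrarily close to `a` with `F x ≠ F a`. As a polynomial, `F` is analytic, so
if it were constant near `a` it would be constant; but for a minimal nonempty `S` with
`c S ≠ 0`, the values of `F` at the indicator of `S` and at `0` differ by `c S`.
-/

open Finset Topology

section Multilinear

variable {ι R : Type*} [Fintype ι]

def multilinearEval [CommSemiring R] (c : Finset ι → R) (x : ι → R) : R :=
  ∑ S, c S * ∏ i ∈ S, x i

theorem multilinearEval_indicator [DecidableEq ι] [CommSemiring R] (c : Finset ι → R)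
    (S : Finset ι) :
    multilinearEval c (fun i => if i ∈ S then 1 else 0) = ∑ T ∈ S.powerset, c T := by
  simp only [multilinearEval, prod_boole, mul_ite, mul_one, mul_zero, ← sum_filter]
  congr 1
  ext T
  simp [subset_iff]

theorem exists_multilinearEval_ne [CommRing R] {c : Finset ι → R} (hc : ∃ S ≠ ∅, c S ≠ 0) :
    ∃ x y, multilinearEval c x ≠ multilinearEval c y := by
  classical
  obtain ⟨S, hSmem, hmin⟩ :=
    exists_min_image {S | S ≠ ∅ ∧ c S ≠ 0} card (by simpa [Finset.Nonempty] using hc)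
  obtain ⟨hS, hcS⟩ := (mem_filter.1 hSmem).2
  refine ⟨fun i => if i ∈ S then 1 else 0, fun i => if i ∈ (∅ : Finset ι) then 1 else 0, ?_⟩
  have hsum : ∑ T ∈ S.powerset, c T = c ∅ + c S := by
    refine sum_eq_add _ _ (Ne.symm hS) (fun T hT hne => ?_) (by simp) (by simp)
    by_contra hcT
    exact (card_lt_card (ssubset_of_subset_of_ne (mem_powerset.1 hT) hne.2)).not_ge
      (hmin T (by simp [hne.1, hcT]))
  rw [multilinearEval_indicator, multilinearEval_indicator, hsum]
  simpa using hcS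

def coordReflect [Ring R] (a x : ι → R) (σ : ι → Bool) : ι → R :=
  fun i => if σ i then 2 * a i - x i else x i

theorem sum_prod_coordReflect [DecidableEq ι] [CommRing R] (a x : ι → R) (S : Finset ι) :
    ∑ σ : ι → Bool, ∏ i ∈ S, coordReflect a x σ i = 2 ^ Fintype.card ι * ∏ i ∈ S, a i := by
  have hprod (f : ι → R) : ∏ i ∈ S, f i = ∏ i, if i ∈ S then f i else 1 := by
    rw [prod_ite_mem, univ_inter]
  simp only [hprod, coordReflect]
  rw [← Fintype.prod_sum fun i (b : Bool) =>
    if i ∈ S then (if b then 2 * a i - x i else x i) else 1]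
  have hpair (i : ι) : (∑ b : Bool, if i ∈ S then (if b then 2 * a i - x i else x i) else 1)
      = 2 * if i ∈ S then a i else 1 := by
    split_ifs <;> simp
  simp_rw [hpair, prod_mul_distrib, prod_const, card_univ]

theorem sum_multilinearEval_coordReflect [DecidableEq ι] [CommRing R] (c : Finset ι → R)
    (a x : ι → R) :
    ∑ σ : ι → Bool, multilinearEval c (coordReflect a x σ)
      = 2 ^ Fintype.card ι * multilinearEval c a := by
  simp only [multilinearEval, mul_sum]
  rw [sum_comm]
  refine sum_congr rfl fun S _ => ?_
  rw [← mul_sum, sum_prod_coordReflect]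
  ring

theorem exists_multilinearEval_coordReflect_lt_and_gt [CommRing R] [LinearOrder R]
    [IsStrictOrderedRing R] (c : Finset ι → R) (a x : ι → R)
    (hx : multilinearEval c x ≠ multilinearEval c a) :
    ∃ σ τ, multilinearEval c (coordReflect a x σ) < multilinearEval c a ∧
      multilinearEval c a < multilinearEval c (coordReflect a x τ) := by
  classical
  set g : (ι → Bool) → R := fun σ => multilinearEval c (coordReflect a x σ) - multilinearEval c a
  have hsum : ∑ σ, g σ = 0 := by
    simp [g, sum_sub_distrib, sum_multilinearEval_coordReflect]
  have hne : ∃ σ ∈ univ, g σ ≠ 0 := ⟨fun _ => false, mem_univ _, sub_ne_zero.2 hx⟩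
  obtain ⟨σ, -, hσ⟩ := exists_pos_of_sum_zero_of_exists_nonzero (s := univ) (fun σ => -g σ)
    (by rw [sum_neg_distrib, hsum, neg_zero]) (by simpa using hne)
  obtain ⟨τ, -, hτ⟩ := exists_pos_of_sum_zero_of_exists_nonzero g hsum hne
  exact ⟨σ, τ, by simpa [g] using hσ, by simpa [g] using hτ⟩

end Multilinear

open Set in
theorem AnalyticOnNhd.exists_norm_sub_lt_ne {𝕜 E F : Type*} [NontriviallyNormedField 𝕜]
    [NormedAddCommGroup E] [NormedSpace 𝕜 E] [PreconnectedSpace E]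
    [NormedAddCommGroup F] [NormedSpace 𝕜 F] {f : E → F} (hf : AnalyticOnNhd 𝕜 f univ)
    (hnc : ∃ x y, f x ≠ f y) (a : E) {ε : ℝ} (hε : 0 < ε) : ∃ x, ‖x - a‖ < ε ∧ f x ≠ f a := by
  by_contra! hconst
  have hloc : f =ᶠ[𝓝 a] fun _ => f a :=
    Filter.mem_of_superset (Metric.ball_mem_nhds a hε) fun x hx => hconst x (mem_ball_iff_norm.1 hx)
  obtain ⟨x, y, hxy⟩ := hnc
  have hf_eq := hf.eq_of_eventuallyEq analyticOnNhd_const hloc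
  exact hxy (by rw [hf_eq])

section EuclideanSpace

variable {𝕜 ι : Type*} [RCLike 𝕜] [Fintype ι]

theorem analyticOnNhd_multilinearEval (c : Finset ι → 𝕜) :
    AnalyticOnNhd 𝕜 (fun x : EuclideanSpace 𝕜 ι => multilinearEval c x) Set.univ :=
  Finset.analyticOnNhd_fun_sum _ fun _ _ => analyticOnNhd_const.mul <|
    Finset.analyticOnNhd_fun_prod _ fun i _ => (EuclideanSpace.proj (𝕜 := 𝕜) i).analyticOnNhd _

theorem norm_toLp_coordReflect_sub (a x : EuclideanSpace 𝕜 ι) (σ : ι → Bool) :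
    ‖WithLp.toLp 2 (coordReflect a x σ) - a‖ = ‖x - a‖ := by
  rw [EuclideanSpace.norm_eq, EuclideanSpace.norm_eq]
  congr 1
  refine sum_congr rfl fun i _ => ?_
  cases hσ : σ i
  · simp [coordReflect, hσ]
  · rw [← norm_neg ((x - a) i)]
    simp only [coordReflect, hσ, PiLp.sub_apply, if_true]
    ring_nf

end EuclideanSpace

open WithLp in
theorem stmt_5_general (n : ℕ) (F : EuclideanSpace ℝ (Fin n) → ℝ)
    (c : Finset (Fin n) → ℝ)
    (hF : ∀ x, F x = ∑ S : Finset (Fin n), c S * ∏ i ∈ S, x i)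
    (hnc : ∃ S : Finset (Fin n), S ≠ ∅ ∧ c S ≠ 0)
    (a : EuclideanSpace ℝ (Fin n)) :
    ∀ ε > (0 : ℝ), ∃ x y : EuclideanSpace ℝ (Fin n),
      ‖x - a‖ < ε ∧ ‖y - a‖ < ε ∧ F x > F a ∧ F y < F a := by
  intro ε hε
  obtain rfl : F = fun x : EuclideanSpace ℝ (Fin n) => multilinearEval c x := funext hF
  obtain ⟨x₀, y₀, hne⟩ := exists_multilinearEval_ne hnc
  obtain ⟨x, hx, hxa⟩ := (analyticOnNhd_multilinearEval c).exists_norm_sub_lt_ne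
    ⟨toLp 2 x₀, toLp 2 y₀, hne⟩ a hε
  obtain ⟨σ, τ, hσ, hτ⟩ := exists_multilinearEval_coordReflect_lt_and_gt c a x hxa
  exact ⟨toLp 2 (coordReflect a x τ), toLp 2 (coordReflect a x σ),
    by rwa [norm_toLp_coordReflect_sub], by rwa [norm_toLp_coordReflect_sub], hτ, hσ⟩

/-- Every critical point of a non-constant multilinear polynomial is a saddle
point: arbitrarily close to it there are points with strictly larger and
strictly smaller values. -/
theorem stmt_5 (n : ℕ) (F : EuclideanSpace ℝ (Fin n) → ℝ)
    (c : Finset (Fin n) → ℝ)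
    (hF : ∀ x, F x = ∑ S : Finset (Fin n), c S * ∏ i ∈ S, x i)
    (hnc : ∃ S : Finset (Fin n), S ≠ ∅ ∧ c S ≠ 0)
    (a : EuclideanSpace ℝ (Fin n)) (hcrit : fderiv ℝ F a = 0) :
    ∀ ε > (0 : ℝ), ∃ x y : EuclideanSpace ℝ (Fin n),
      ‖x - a‖ < ε ∧ ‖y - a‖ < ε ∧ F x > F a ∧ F y < F a :=
  stmt_5_general n F c hF hnc a
end

section
/- For every non-constant multilinear polynomial F : ℝ^n → ℝ with F(0) = 0, there exist vectors v⁺, v⁻ ∈ ℝ^n and ε > 0 such that for all δ with 0 < δ < ε, F(δ·v⁺) > 0 and F(δ·v⁻) < 0. -/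
/-!
Choose `S₀` minimal under inclusion among the sets with `c S₀ ≠ 0`; since `F 0 = c ∅ = 0`,
`S₀` is nonempty. Along a vector supported on `S₀` only the monomial of `S₀` survives, so for
`v = 1_{S₀}` with its entry at some `i₀ ∈ S₀` replaced by `s` we get
`F (δ • v) = c S₀ * δ ^ #S₀ * s`, whose sign for `δ > 0` is that of `c S₀ * s`.
-/

open Finset

variable {ι R : Type*}

theorem exists_minimal_coeff_ne_zero [Zero R] (c : Finset ι → R) (h : ∃ S, c S ≠ 0) :
    ∃ S₀, c S₀ ≠ 0 ∧ ∀ T ⊂ S₀, c T = 0 := by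
  obtain ⟨S₀, hS₀, hmin⟩ := wellFounded_lt.has_min {S | c S ≠ 0} h
  exact ⟨S₀, hS₀, fun T hT => not_not.mp fun hcT => hmin T hcT hT⟩

theorem sum_coeff_mul_prod_eq_of_minimal [Fintype ι] [CommSemiring R] (c : Finset ι → R)
    {S₀ : Finset ι} (hmin : ∀ T ⊂ S₀, c T = 0) {x : ι → R} (hx : ∀ i ∉ S₀, x i = 0) :
    ∑ S, c S * ∏ i ∈ S, x i = c S₀ * ∏ i ∈ S₀, x i := by
  refine Fintype.sum_eq_single S₀ fun S hS => ?_
  by_cases hsub : S ⊆ S₀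
  · rw [hmin S (ssubset_of_subset_of_ne hsub hS), zero_mul]
  · obtain ⟨i, hiS, hiS₀⟩ := not_subset.mp hsub
    rw [prod_eq_zero hiS (hx i hiS₀), mul_zero]

theorem sum_coeff_mul_prod_zero [Fintype ι] [CommSemiring R] (c : Finset ι → R) :
    ∑ S, c S * ∏ i ∈ S, (0 : ι → R) i = c ∅ := by
  simpa using sum_coeff_mul_prod_eq_of_minimal c (S₀ := ∅) (by simp) (x := 0) (by simp)

variable [DecidableEq ι]

def signedIndicator [Zero R] [One R] (S : Finset ι) (i₀ : ι) (s : R) : ι → R :=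
  fun i => if i ∈ S then if i = i₀ then s else 1 else 0

theorem signedIndicator_of_notMem [Zero R] [One R] {S : Finset ι} {i : ι} (hi : i ∉ S)
    (i₀ : ι) (s : R) : signedIndicator S i₀ s i = 0 :=
  if_neg hi

theorem prod_smul_signedIndicator [CommMonoid R] [Zero R] {S : Finset ι} {i₀ : ι} (hi₀ : i₀ ∈ S)
    (s δ : R) : ∏ i ∈ S, (δ • signedIndicator S i₀ s) i = δ ^ #S * s := by
  have hS : ∀ i ∈ S, (δ • signedIndicator S i₀ s) i = δ * if i = i₀ then s else 1 := by
    intro i hi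
    simp [signedIndicator, hi]
  rw [prod_congr rfl hS, prod_mul_distrib, prod_const, prod_ite_eq' S i₀ (fun _ => s), if_pos hi₀]

/-- For a non-constant multilinear polynomial `F` with `F 0 = 0`, there are
directions `v⁺, v⁻` and `ε > 0` so that moving distance `δ < ε` along `v⁺`
gives a positive value and along `v⁻` a negative value. -/
theorem stmt_6 (n : ℕ) (F : (Fin n → ℝ) → ℝ) (c : Finset (Fin n) → ℝ)
    (hF : ∀ x, F x = ∑ S : Finset (Fin n), c S * ∏ i ∈ S, x i)
    (hnc : ∃ S : Finset (Fin n), S ≠ ∅ ∧ c S ≠ 0)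
    (h0 : F 0 = 0) :
    ∃ (vp vm : Fin n → ℝ) (ε : ℝ), 0 < ε ∧
      ∀ δ : ℝ, 0 < δ → δ < ε → F (δ • vp) > 0 ∧ F (δ • vm) < 0 := by
  obtain ⟨S₀, hcS₀, hmin⟩ := exists_minimal_coeff_ne_zero c (hnc.imp fun _ => And.right)
  have hc_empty : c ∅ = 0 := by rw [← sum_coeff_mul_prod_zero c, ← hF, h0]
  obtain ⟨i₀, hi₀⟩ : S₀.Nonempty :=
    nonempty_iff_ne_empty.mpr fun h => hcS₀ (h ▸ hc_empty)
  have hF_dir (s δ : ℝ) : F (δ • signedIndicator S₀ i₀ s) = c S₀ * (δ ^ #S₀ * s) := by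
    rw [hF, sum_coeff_mul_prod_eq_of_minimal c hmin fun i hi => by
      simp [signedIndicator_of_notMem hi], prod_smul_signedIndicator hi₀]
  refine ⟨signedIndicator S₀ i₀ (c S₀), signedIndicator S₀ i₀ (-c S₀), 1, one_pos,
    fun δ hδ _ => ?_⟩
  have hpow : 0 < δ ^ #S₀ := pow_pos hδ _
  have hsq : 0 < c S₀ * c S₀ := mul_self_pos.mpr hcS₀
  rw [hF_dir, hF_dir]
  constructor <;> nlinarith
end

section
/- Let F be a multilinear polynomial that is a sum of Fourier expansions of clauses of a Boolean formula, and suppose a* ∈ [-1,1]^n is a local minimum of F on [-1,1]^n. Then a* is feasible: fixing the coordinates of a* lying in {-1,1} to their values makes F a constant function of the remaining coordinates. -/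
/-!
A multilinear polynomial is affine in each coordinate separately, and an affine function of one
real variable with a local minimum is constant. This propagates by induction over the coordinates
allowed to vary. If `a` minimizes `f` locally on the slice through `a` where the coordinates in
`insert i s` vary, then for every `t` near `a i` the point `a` still minimizes `x ↦ f (x[i := t])`
on the `s`-slice, so by induction `f` is constant on all `s`-slices with `i`-th coordinate near
`a i`, and being affine in `x i` it is constant on the whole slice. On the cube, the slice in which
the coordinates of `a` other than `±1` vary contains a neighbourhood of `a` within the cube.
-/

open Function Filter Topology

variable {ι : Type*}

def coordSlice (I : Finset ι) (a : ι → ℝ) : Set (ι → ℝ) := {x | ∀ j ∉ I, x j = a j}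

section SeparatelyAffine

variable [DecidableEq ι]

def IsSeparatelyAffine (f : (ι → ℝ) → ℝ) : Prop :=
  ∀ x i, ∃ α β : ℝ, ∀ t, f (update x i t) = α + β * t

lemma isSeparatelyAffine_const (c : ℝ) : IsSeparatelyAffine (ι := ι) fun _ => c :=
  fun _ _ => ⟨c, 0, fun _ => by ring⟩

lemma isSeparatelyAffine_prod_apply (S : Finset ι) :
    IsSeparatelyAffine fun x => ∏ i ∈ S, x i := fun x i => by
  by_cases hi : i ∈ S
  · exact ⟨0, ∏ j ∈ S \ {i}, x j, fun t => by
      dsimp only; rw [Finset.prod_update_of_mem hi]; ring⟩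
  · exact ⟨∏ j ∈ S, x j, 0, fun t => by
      dsimp only; rw [Finset.prod_update_of_notMem hi]; ring⟩

namespace IsSeparatelyAffine

variable {f g : (ι → ℝ) → ℝ}

lemma add (hf : IsSeparatelyAffine f) (hg : IsSeparatelyAffine g) :
    IsSeparatelyAffine (f + g) := fun x i => by
  obtain ⟨α, β, h⟩ := hf x i
  obtain ⟨α', β', h'⟩ := hg x i
  exact ⟨α + α', β + β', fun t => by simp only [Pi.add_apply, h, h']; ring⟩

lemma const_mul (hf : IsSeparatelyAffine f) (c : ℝ) : IsSeparatelyAffine fun x => c * f x :=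
  fun x i => by
    obtain ⟨α, β, h⟩ := hf x i
    exact ⟨c * α, c * β, fun t => by dsimp only; rw [h]; ring⟩

lemma sum {κ : Type*} {s : Finset κ} {f : κ → (ι → ℝ) → ℝ}
    (hf : ∀ k ∈ s, IsSeparatelyAffine (f k)) : IsSeparatelyAffine fun x => ∑ k ∈ s, f k x := by
  classical
  induction s using Finset.induction_on with
  | empty => simpa using isSeparatelyAffine_const 0
  | insert k s hk ih =>
    simp only [Finset.sum_insert hk]
    exact (hf k (s.mem_insert_self k)).add (ih fun l hl => hf l (Finset.mem_insert_of_mem hl))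

lemma comp_update (hf : IsSeparatelyAffine f) (i : ι) (t : ℝ) :
    IsSeparatelyAffine fun x => f (update x i t) := fun x j => by
  by_cases hji : j = i
  · subst hji
    exact ⟨f (update x j t), 0, fun s => by simp⟩
  · obtain ⟨α, β, h⟩ := hf (update x i t) j
    exact ⟨α, β, fun s => by dsimp only; rw [update_comm hji, h]⟩

lemma update_eq_of_isLocalMin (hf : IsSeparatelyAffine f) {x : ι → ℝ} {i : ι} {t₀ : ℝ}
    (hmin : IsLocalMin (fun t => f (update x i t)) t₀) (t : ℝ) :
    f (update x i t) = f (update x i t₀) := by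
  obtain ⟨α, β, h⟩ := hf x i
  have hderiv : HasDerivAt (fun t => f (update x i t)) β t₀ := by
    simp only [h]
    simpa using ((hasDerivAt_id t₀).const_mul β).const_add α
  have hβ : β = 0 := hmin.hasDerivAt_eq_zero hderiv
  simp [h, hβ]

lemma eq_of_isLocalMinOn_coordSlice (hf : IsSeparatelyAffine f) {I : Finset ι} {a : ι → ℝ}
    (hmin : IsLocalMinOn f (coordSlice I a) a) {y : ι → ℝ} (hy : y ∈ coordSlice I a) :
    f y = f a := by
  induction I using Finset.induction_on generalizing f y with
  | empty => rw [show y = a from funext fun j => hy j (Finset.notMem_empty j)]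
  | insert i s _ ih =>
    have hupdate_mem : ∀ t, ∀ x ∈ coordSlice s a, update x i t ∈ coordSlice (insert i s) a :=
      fun t x hx j hj => by
        rw [Finset.mem_insert, not_or] at hj
        rw [update_of_ne hj.1, hx j hj.2]
    have hline_min : IsLocalMin (fun t => f (update a i t)) (a i) := by
      have hT : Tendsto (update a i) (𝓝 (a i)) (𝓝[coordSlice (insert i s) a] a) :=
        tendsto_nhdsWithin_iff.2
          ⟨by simpa using ((continuous_const (y := a)).update i continuous_id).tendsto (a i),
            Eventually.of_forall fun t => hupdate_mem t a fun _ _ => rfl⟩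
      exact (show IsMinFilter f _ (update a i (a i)) by rwa [update_eq_self]).comp_tendsto hT
    have hline : ∀ t, f (update a i t) = f a := fun t => by
      rw [hf.update_eq_of_isLocalMin hline_min t, update_eq_self]
    have hslice_min : ∀ᶠ t in 𝓝 (a i),
        IsLocalMinOn (fun x => f (update x i t)) (coordSlice s a) a := by
      have hT : Tendsto (fun p : ℝ × (ι → ℝ) => update p.2 i p.1)
          (𝓝 (a i) ×ˢ 𝓝[coordSlice s a] a) (𝓝[coordSlice (insert i s) a] a) := by
        refine tendsto_nhdsWithin_iff.2 ⟨?_, ?_⟩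
        · have := (continuous_snd.update i continuous_fst).tendsto (a i, a)
          rw [nhds_prod_eq] at this
          simpa using this.mono_left (Filter.prod_mono le_rfl nhdsWithin_le_nhds)
        · filter_upwards [prod_mem_prod univ_mem self_mem_nhdsWithin] with p hp
          exact hupdate_mem p.1 p.2 hp.2
      filter_upwards [(hT.eventually hmin).curry] with t ht
      simpa [IsLocalMinOn, IsMinFilter, hline t] using ht
    have hslice : ∀ᶠ t in 𝓝 (a i), ∀ z ∈ coordSlice s a, f (update z i t) = f a := by
      filter_upwards [hslice_min] with t ht z hz
      rw [ih (hf.comp_update i t) ht hz, hline t]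
    set z := update y i (a i)
    have hz : z ∈ coordSlice s a := fun j hj => by
      by_cases hji : j = i
      · subst hji; simp [z]
      · simp only [z, update_of_ne hji]; exact hy j (by simp [hji, hj])
    have hz_min : IsLocalMin (fun t => f (update z i t)) (a i) := by
      filter_upwards [hslice] with t ht
      rw [ht z hz, hslice.self_of_nhds z hz]
    calc f y = f (update z i (y i)) := by simp [z]
      _ = f (update z i (a i)) := hf.update_eq_of_isLocalMin hz_min _
      _ = f a := hslice.self_of_nhds z hz

end IsSeparatelyAffine

end SeparatelyAffine

open Set in
lemma pi_Icc_mem_nhdsWithin_coordSlice [Fintype ι] {a : ι → ℝ} (ha : ∀ i, a i ∈ Icc (-1) 1) :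
    {x : ι → ℝ | ∀ i, x i ∈ Icc (-1) 1} ∈
      𝓝[coordSlice (Finset.univ.filter fun i => ¬(a i = 1 ∨ a i = -1)) a] a := by
  refine eventually_all.2 fun i => ?_
  by_cases hfix : a i = 1 ∨ a i = -1
  · filter_upwards [self_mem_nhdsWithin] with x hx
    rw [hx i (by simpa [or_iff_not_imp_left] using hfix)]
    exact ha i
  · have hfree : a i ∈ Ioo (-1) 1 := by
      push Not at hfix
      exact ⟨lt_of_le_of_ne (ha i).1 hfix.2.symm, lt_of_le_of_ne (ha i).2 hfix.1⟩
    exact mem_nhdsWithin_of_mem_nhds <| ((continuous_apply i).tendsto a).eventually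
      (Ioo_mem_nhds hfree.1 hfree.2) |>.mono fun _ h => Ioo_subset_Icc_self h

theorem stmt_7_general (n m : ℕ) (p : Fin m → EuclideanSpace ℝ (Fin n) → ℝ)
    (hml : ∀ j, ∃ c : Finset (Fin n) → ℝ,
      ∀ x : EuclideanSpace ℝ (Fin n), p j x = ∑ S : Finset (Fin n), c S * ∏ i ∈ S, x i)
    (F : EuclideanSpace ℝ (Fin n) → ℝ) (hF : ∀ x, F x = ∑ j, p j x)
    (a : EuclideanSpace ℝ (Fin n)) (ha : ∀ i, a i ∈ Set.Icc (-1 : ℝ) 1)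
    (hloc : ∃ δ > (0 : ℝ), ∀ x : EuclideanSpace ℝ (Fin n),
      (∀ i, x i ∈ Set.Icc (-1 : ℝ) 1) → ‖x - a‖ ≤ δ → F a ≤ F x) :
    ∀ y : EuclideanSpace ℝ (Fin n), (∀ i, y i ∈ Set.Icc (-1 : ℝ) 1) →
      (∀ i, (a i = 1 ∨ a i = -1) → y i = a i) → F y = F a := by
  choose c hc using hml
  have hF_affine : IsSeparatelyAffine fun x => F (WithLp.toLp 2 x) := by
    have hF_sum : (fun x => F (WithLp.toLp 2 x)) = fun x => ∑ j, ∑ S, c j S * ∏ i ∈ S, x i :=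
      funext fun x => by simp [hF, hc]
    rw [hF_sum]
    exact .sum fun j _ => .sum fun S _ => (isSeparatelyAffine_prod_apply S).const_mul _
  obtain ⟨δ, hδ, hloc⟩ := hloc
  have hball : ∀ᶠ x in 𝓝 a.ofLp, ‖WithLp.toLp 2 x - a‖ ≤ δ := by
    have := (PiLp.continuous_toLp 2 _).tendsto a.ofLp
    filter_upwards [this.eventually (Metric.closedBall_mem_nhds _ hδ)] with x hx
    simpa [dist_eq_norm] using hx
  have hmin : IsLocalMinOn (fun x => F (WithLp.toLp 2 x))
      (coordSlice (Finset.univ.filter fun i => ¬(a i = 1 ∨ a i = -1)) a.ofLp) a.ofLp := by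
    filter_upwards [pi_Icc_mem_nhdsWithin_coordSlice ha, mem_nhdsWithin_of_mem_nhds hball]
      with x hcube hx
    exact hloc _ hcube hx
  intro y _ hfix
  exact hF_affine.eq_of_isLocalMinOn_coordSlice hmin (y := y.ofLp) fun i hi =>
    hfix i (by simpa [or_iff_not_imp_left] using hi)

/-- Any local minimum `a*` on the cube `[-1,1]^n` of a sum `F` of Fourier
expansions of Boolean clauses is feasible: fixing the `±1` coordinates of `a*`
makes `F` constant in the remaining coordinates. -/
theorem stmt_7 (n m : ℕ) (p : Fin m → EuclideanSpace ℝ (Fin n) → ℝ)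
    (hml : ∀ j, ∃ c : Finset (Fin n) → ℝ,
      ∀ x : EuclideanSpace ℝ (Fin n), p j x = ∑ S : Finset (Fin n), c S * ∏ i ∈ S, x i)
    (hbool : ∀ j, ∀ a : EuclideanSpace ℝ (Fin n), (∀ i, a i = 1 ∨ a i = -1) →
      p j a = 1 ∨ p j a = -1)
    (F : EuclideanSpace ℝ (Fin n) → ℝ) (hF : ∀ x, F x = ∑ j, p j x)
    (a : EuclideanSpace ℝ (Fin n)) (ha : ∀ i, a i ∈ Set.Icc (-1 : ℝ) 1)
    (hloc : ∃ δ > (0 : ℝ), ∀ x : EuclideanSpace ℝ (Fin n),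
      (∀ i, x i ∈ Set.Icc (-1 : ℝ) 1) → ‖x - a‖ ≤ δ → F a ≤ F x) :
    ∀ y : EuclideanSpace ℝ (Fin n), (∀ i, y i ∈ Set.Icc (-1 : ℝ) 1) →
      (∀ i, (a i = 1 ∨ a i = -1) → y i = a i) → F y = F a :=
  stmt_7_general n m p hml F hF a ha hloc
end

section
/- Let F : [-1,1]^n → ℝ be a multilinear polynomial with |F(x)| ≤ m on [-1,1]^n. Then its gradient is (m·n)-Lipschitz on the cube: ‖∇F(x) − ∇F(y)‖₂ ≤ m·n·‖x − y‖₂ for all x, y ∈ [-1,1]^n. -/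
/-!
A multilinear polynomial is affine in each coordinate: `F x = F (x with x_j = 0) + x_j ∂_j F x`,
where `∂_j F` is again multilinear and does not depend on `x_j`. Evaluating at `x_j = ±1` gives
`2 ∂_j F x = F (x with x_j = 1) - F (x with x_j = -1)`, so every partial derivative is bounded by
`m` on the cube. Hence, changing one coordinate at a time, each `∂_i F` is `m`-Lipschitz on the
cube for the `ℓ¹` distance, so `m √n`-Lipschitz for the `ℓ²` distance, and collecting the `n`
partial derivatives into the gradient costs another factor `√n`.
-/

open Finset

theorem Finset.sum_univ_finset_eq_sum_powerset_erase {ι M : Type*} [Fintype ι] [DecidableEq ι]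
    [AddCommMonoid M] (f : Finset ι → M) (j : ι) :
    ∑ S, f S = ∑ S ∈ (univ.erase j).powerset, (f S + f (insert j S)) := by
  rw [sum_add_distrib, ← sum_powerset_insert (notMem_erase j univ), insert_erase (mem_univ j),
    powerset_univ]

open Function in
theorem abs_sub_le_mul_sum_of_abs_sub_update_le {ι : Type*} [Fintype ι] [DecidableEq ι]
    {s : ι → Set ℝ} {f : (ι → ℝ) → ℝ} {M : ℝ}
    (hf : ∀ x ∈ Set.univ.pi s, ∀ j, ∀ t ∈ s j, |f x - f (update x j t)| ≤ M * |x j - t|)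
    {x y : ι → ℝ} (hx : x ∈ Set.univ.pi s) (hy : y ∈ Set.univ.pi s) :
    |f x - f y| ≤ M * ∑ j, |x j - y j| := by
  suffices key : ∀ T : Finset ι, ∀ x ∈ Set.univ.pi s, (∀ i ∉ T, x i = y i) →
      |f x - f y| ≤ M * ∑ j ∈ T, |x j - y j| from key univ x hx (by simp)
  intro T
  induction T using Finset.induction_on with
  | empty =>
    intro x _ hxy
    obtain rfl : x = y := funext fun i => hxy i (notMem_empty i)
    simp
  | @insert a T ha ih =>
    intro x hx hxy
    set z := update x a (y a) with hz_def
    have hz : z ∈ Set.univ.pi s := (Set.update_mem_pi_iff_of_mem hx).2 fun _ => hy a trivial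
    have hzy : ∀ i ∉ T, z i = y i := by
      intro i hi
      rcases eq_or_ne i a with rfl | hia
      · exact update_self ..
      · rw [hz_def, update_of_ne hia]; exact hxy i (by simp [hia, hi])
    have hzx : ∑ j ∈ T, |z j - y j| = ∑ j ∈ T, |x j - y j| :=
      sum_congr rfl fun j hj => by rw [hz_def, update_of_ne (ne_of_mem_of_not_mem hj ha)]
    calc |f x - f y| ≤ |f x - f z| + |f z - f y| := abs_sub_le _ _ _
      _ ≤ M * |x a - y a| + M * ∑ j ∈ T, |x j - y j| :=
          add_le_add (hf x hx a (y a) (hy a trivial)) (hzx ▸ ih z hz hzy)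
      _ = M * ∑ j ∈ insert a T, |x j - y j| := by rw [sum_insert ha, mul_add]

namespace EuclideanSpace

variable {ι : Type*} [Fintype ι]

theorem norm_le_sqrt_card_mul {v : EuclideanSpace ℝ ι} {a : ℝ} (hv : ∀ i, |v i| ≤ a)
    (ha : 0 ≤ a) : ‖v‖ ≤ √(Fintype.card ι) * a := by
  rw [norm_eq, ← Real.sqrt_sq ha, ← Real.sqrt_mul (Nat.cast_nonneg _)]
  refine Real.sqrt_le_sqrt ?_
  calc ∑ i, ‖v i‖ ^ 2 ≤ ∑ _i : ι, a ^ 2 :=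
        sum_le_sum fun i _ => by
          rw [Real.norm_eq_abs]; exact pow_le_pow_left₀ (abs_nonneg _) (hv i) 2
    _ = Fintype.card ι * a ^ 2 := by simp

theorem sum_abs_le_sqrt_card_mul_norm (v : EuclideanSpace ℝ ι) :
    ∑ i, |v i| ≤ √(Fintype.card ι) * ‖v‖ := by
  rw [← Real.sqrt_sq (norm_nonneg v), ← Real.sqrt_mul (Nat.cast_nonneg _), real_norm_sq_eq]
  refine Real.le_sqrt_of_sq_le ?_
  simpa using sq_sum_le_card_mul_sum_sq (s := univ) (f := fun i => |v i|)

theorem gradient_apply_eq_fderiv_single [DecidableEq ι] (f : EuclideanSpace ℝ ι → ℝ)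
    (x : EuclideanSpace ℝ ι) (j : ι) :
    gradient f x j = fderiv ℝ f x (single j 1) := by
  calc gradient f x j = inner ℝ (gradient f x) (single j 1) := by
        rw [inner_single_right, one_mul, conj_trivial]
    _ = fderiv ℝ f x (single j 1) := InnerProductSpace.toDual_symm_apply

end EuclideanSpace

def cube (ι : Type*) : Set (ι → ℝ) := Set.univ.pi fun _ => Set.Icc (-1) 1

namespace MultilinearPoly

open Function

variable {ι : Type*} [Fintype ι]

def eval {R : Type*} [CommSemiring R] (c : Finset ι → R) (x : ι → R) : R :=
  ∑ S, c S * ∏ i ∈ S, x i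

def pderiv {R : Type*} [Zero R] [DecidableEq ι] (c : Finset ι → R) (j : ι) : Finset ι → R :=
  fun S => if j ∈ S then 0 else c (insert j S)

section CommSemiring

variable {R : Type*} [CommSemiring R] [DecidableEq ι]

theorem eval_pderiv (c : Finset ι → R) (x : ι → R) (j : ι) :
    eval (pderiv c j) x = ∑ S ∈ (univ.erase j).powerset, c (insert j S) * ∏ i ∈ S, x i := by
  rw [eval, sum_univ_finset_eq_sum_powerset_erase _ j]
  refine sum_congr rfl fun S hS => ?_
  have hj : j ∉ S := fun h => notMem_erase j univ (mem_powerset.1 hS h)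
  simp [pderiv, hj]

theorem eval_pderiv_update (c : Finset ι → R) (x : ι → R) (j : ι) (t : R) :
    eval (pderiv c j) (update x j t) = eval (pderiv c j) x := by
  refine sum_congr rfl fun S _ => ?_
  by_cases hj : j ∈ S
  · simp [pderiv, hj]
  · rw [prod_update_of_notMem hj]

theorem eval_eq_eval_update_zero_add (c : Finset ι → R) (x : ι → R) (j : ι) :
    eval c x = eval c (update x j 0) + x j * eval (pderiv c j) x := by
  rw [eval, eval, sum_univ_finset_eq_sum_powerset_erase _ j,
    sum_univ_finset_eq_sum_powerset_erase _ j, eval_pderiv, mul_sum, ← sum_add_distrib]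
  refine sum_congr rfl fun S hS => ?_
  have hj : j ∉ S := fun h => notMem_erase j univ (mem_powerset.1 hS h)
  rw [prod_insert hj, prod_insert hj, prod_update_of_notMem hj, update_self]
  ring

theorem eval_update (c : Finset ι → R) (x : ι → R) (j : ι) (t : R) :
    eval c (update x j t) = eval c (update x j 0) + t * eval (pderiv c j) x := by
  rw [eval_eq_eval_update_zero_add c (update x j t) j, update_idem, update_self,
    eval_pderiv_update]

end CommSemiring

variable [DecidableEq ι] {c : Finset ι → ℝ} {m : ℝ}

theorem abs_eval_pderiv_le (hc : ∀ x ∈ cube ι, |eval c x| ≤ m) {x : ι → ℝ} (hx : x ∈ cube ι)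
    (j : ι) : |eval (pderiv c j) x| ≤ m := by
  have hupd : ∀ t ∈ Set.Icc (-1 : ℝ) 1, update x j t ∈ cube ι :=
    fun t ht => (Set.update_mem_pi_iff_of_mem hx).2 fun _ => ht
  have h1 := hc _ (hupd 1 (by norm_num))
  have h2 := hc _ (hupd (-1) (by norm_num))
  rw [eval_update] at h1 h2
  rw [abs_le] at h1 h2 ⊢
  constructor <;> linarith

theorem abs_eval_sub_eval_update_le (hc : ∀ x ∈ cube ι, |eval c x| ≤ m) {x : ι → ℝ}
    (hx : x ∈ cube ι) (j : ι) (t : ℝ) :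
    |eval c x - eval c (update x j t)| ≤ m * |x j - t| := by
  have hx_eq := eval_update c x j (x j)
  rw [update_eq_self] at hx_eq
  rw [hx_eq, eval_update c x j t, add_sub_add_left_eq_sub, ← sub_mul, abs_mul, mul_comm]
  exact mul_le_mul_of_nonneg_right (abs_eval_pderiv_le hc hx j) (abs_nonneg _)

theorem abs_eval_sub_le (hc : ∀ x ∈ cube ι, |eval c x| ≤ m) {x y : ι → ℝ} (hx : x ∈ cube ι)
    (hy : y ∈ cube ι) : |eval c x - eval c y| ≤ m * ∑ j, |x j - y j| :=
  abs_sub_le_mul_sum_of_abs_sub_update_le (fun _ hz j t _ => abs_eval_sub_eval_update_le hc hz j t)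
    hx hy

theorem fderiv_eval_single (c : Finset ι → ℝ) (x : EuclideanSpace ℝ ι) (j : ι) :
    fderiv ℝ (fun y : EuclideanSpace ℝ ι => eval c y) x (EuclideanSpace.single j 1)
      = eval (pderiv c j) x := by
  have hd : DifferentiableAt ℝ (fun y : EuclideanSpace ℝ ι => eval c y) x := by
    unfold eval; fun_prop
  have hline : HasDerivAt (fun t : ℝ => x + t • EuclideanSpace.single j 1)
      (EuclideanSpace.single j 1) 0 := by
    simpa using ((hasDerivAt_id (0 : ℝ)).smul_const (EuclideanSpace.single j (1 : ℝ))).const_add x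
  have hline_eq : ∀ t : ℝ,
      (x + t • EuclideanSpace.single j 1).ofLp = update x.ofLp j (x j + t) := by
    intro t
    ext i
    rcases eq_or_ne i j with rfl | hij <;> simp [*]
  have h2 : HasDerivAt (fun t : ℝ => eval c (x + t • EuclideanSpace.single j 1).ofLp)
      (eval (pderiv c j) x) 0 := by
    have : HasDerivAt (fun t => eval c (update x.ofLp j 0) + (x j + t) * eval (pderiv c j) x)
        (eval (pderiv c j) x) 0 := by
      simpa using (((hasDerivAt_id (0 : ℝ)).const_add (x j)).mul_const
        (eval (pderiv c j) x)).const_add (eval c (update x.ofLp j 0))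
    convert this using 2 with t
    rw [hline_eq, eval_update]
  exact (hd.hasFDerivAt.comp_hasDerivAt_of_eq 0 hline (by simp)).unique h2

theorem gradient_eval (c : Finset ι → ℝ) (x : EuclideanSpace ℝ ι) :
    gradient (fun y : EuclideanSpace ℝ ι => eval c y) x
      = WithLp.toLp 2 fun j => eval (pderiv c j) x := by
  ext j
  rw [EuclideanSpace.gradient_apply_eq_fderiv_single, fderiv_eval_single]

end MultilinearPoly

open MultilinearPoly in
/-- A multilinear polynomial bounded by `m` on the cube `[-1,1]^n` has an
`(m·n)`-Lipschitz gradient on the cube. -/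
theorem stmt_11 (n : ℕ) (m : ℝ) (F : EuclideanSpace ℝ (Fin n) → ℝ)
    (c : Finset (Fin n) → ℝ)
    (hF : ∀ x, F x = ∑ S : Finset (Fin n), c S * ∏ i ∈ S, x i)
    (hbd : ∀ x : EuclideanSpace ℝ (Fin n), (∀ i, x i ∈ Set.Icc (-1 : ℝ) 1) → |F x| ≤ m) :
    ∀ x y : EuclideanSpace ℝ (Fin n),
      (∀ i, x i ∈ Set.Icc (-1 : ℝ) 1) → (∀ i, y i ∈ Set.Icc (-1 : ℝ) 1) →
      ‖gradient F x - gradient F y‖ ≤ m * n * ‖x - y‖ := by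
  intro x y hx hy
  obtain rfl : F = fun z : EuclideanSpace ℝ (Fin n) => eval c z := funext hF
  have hc : ∀ z ∈ cube (Fin n), |eval c z| ≤ m :=
    fun z hz => hbd (WithLp.toLp 2 z) (Set.mem_univ_pi.1 hz)
  have hm : 0 ≤ m := (abs_nonneg _).trans (hbd x hx)
  set g := fun z : EuclideanSpace ℝ (Fin n) => WithLp.toLp 2 fun j => eval (pderiv c j) z
  have hpartial (j : Fin n) : |(g x - g y) j| ≤ m * ∑ i, |(x - y) i| := by
    simpa [g] using abs_eval_sub_le (fun z hz => abs_eval_pderiv_le hc hz j)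
      (Set.mem_univ_pi.2 hx) (Set.mem_univ_pi.2 hy)
  rw [gradient_eval, gradient_eval]
  calc ‖g x - g y‖ ≤ √n * (m * ∑ i, |(x - y) i|) := by
        simpa using EuclideanSpace.norm_le_sqrt_card_mul hpartial
          (mul_nonneg hm (sum_nonneg fun _ _ => abs_nonneg _))
    _ ≤ √n * (m * (√n * ‖x - y‖)) := by
        gcongr
        simpa using EuclideanSpace.sum_abs_le_sqrt_card_mul_norm (x - y)
    _ = m * (√n * √n) * ‖x - y‖ := by ring
    _ = m * n * ‖x - y‖ := by rw [Real.mul_self_sqrt (Nat.cast_nonneg n)]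
end
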